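/- Let X be a finite connected quandle, x, y ∈ X, and let m_{x,y} be the minimal positive integer n with x◁^n y = x. Then m_{x,y} divides |Inn(X)|/|X|, the order of the stabilizer of x in Inn(X). -/

import Mathlib

/-- A quandle in the convention of the paper. -/
class PQuandle (X : Type*) where
  op : X → X → X
  op_self : ∀ a : X, op a a = a
  op_bij : ∀ a : X, Function.Bijective (fun x => op x a)
  op_distrib : ∀ a b c : X, op (op a b) c = op (op a c) (op b c)

infixl:65 " ◁ " => PQuandle.op

namespace PQuandle

variable {X : Type*} [PQuandle X]

/-- The `n`-fold right operation `x ◁ⁿ y`. -/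
def opn (x : X) (n : ℕ) (y : X) : X := (fun z => z ◁ y)^[n] x

/-- The right translation `(· ◁ y)` as a permutation of `X`. -/
noncomputable def act (y : X) : Equiv.Perm X := Equiv.ofBijective _ (op_bij y)

@[simp] lemma act_apply (y x : X) : act y x = x ◁ y := rfl

/-- The inner automorphism group `Inn(X)`. -/
noncomputable def Inn (X : Type*) [PQuandle X] : Subgroup (Equiv.Perm X) :=
  Subgroup.closure (Set.range (act (X := X)))

/-- The relators `e_{x ◁ y}⁻¹ e_y⁻¹ e_x e_y` of the adjoint group. -/
def adjRels (X : Type*) [PQuandle X] : Set (FreeGroup X) :=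
  { r | ∃ x y : X,
      r = (FreeGroup.of (x ◁ y))⁻¹ * (FreeGroup.of y)⁻¹ * FreeGroup.of x * FreeGroup.of y }

/-- The adjoint (enveloping) group `As(X)` of the quandle `X`. -/
def Adj (X : Type*) [PQuandle X] : Type _ := PresentedGroup (adjRels X)

instance : Group (Adj X) := by unfold Adj; infer_instance

/-- The generator `e_x` of `As(X)`. -/
def gen (x : X) : Adj X := PresentedGroup.of x

lemma gen_rel (x y : X) : gen (x ◁ y) = (gen y)⁻¹ * gen x * gen y := by
  have h : ((FreeGroup.of (x ◁ y))⁻¹ * (FreeGroup.of y)⁻¹ * FreeGroup.of x * FreeGroup.of y :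
      FreeGroup X) ∈ Subgroup.normalClosure (adjRels X) :=
    Subgroup.subset_normalClosure ⟨x, y, rfl⟩
  have h2 : ((gen (x ◁ y))⁻¹ * (gen y)⁻¹ * gen x * gen y : Adj X) = 1 := by
    have := (QuotientGroup.eq_one_iff
      (((FreeGroup.of (x ◁ y))⁻¹ * (FreeGroup.of y)⁻¹ * FreeGroup.of x * FreeGroup.of y :
        FreeGroup X))).mpr h
    exact this
  calc gen (x ◁ y)
      = gen (x ◁ y) * ((gen (x ◁ y))⁻¹ * (gen y)⁻¹ * gen x * gen y) := by rw [h2, mul_one]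
    _ = (gen y)⁻¹ * gen x * gen y := by group

lemma act_mul_act (x y : X) : act y * act x = act (x ◁ y) * act y := by
  ext z
  simp only [Equiv.Perm.mul_apply, act_apply]
  exact op_distrib z x y

/-- The homomorphism `As(X) → Perm(X)` sending `e_y` to the inverse of the right
translation by `y`; it encodes the right action of `As(X)` on `X`. -/
noncomputable def innHom : Adj X →* Equiv.Perm X :=
  PresentedGroup.toGroup (f := fun y : X => (act y)⁻¹) (by
    rintro r ⟨x, y, rfl⟩
    simp only [map_mul, map_inv, FreeGroup.lift_apply_of, inv_inv]
    have := act_mul_act x y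
    calc act (x ◁ y) * act y * (act x)⁻¹ * (act y)⁻¹
        = (act y * act x) * (act x)⁻¹ * (act y)⁻¹ := by rw [this]
      _ = 1 := by group)

@[simp] lemma innHom_gen (y : X) : innHom (gen y) = (act y)⁻¹ :=
  PresentedGroup.toGroup.of _

/-- The right action of `As(X)` on `X`: `x · g`. -/
noncomputable def ract (x : X) (g : Adj X) : X := (innHom g)⁻¹ x

@[simp] lemma ract_gen (x y : X) : ract x (gen y) = x ◁ y := by
  simp [ract]

lemma ract_mul (x : X) (g h : Adj X) : ract x (g * h) = ract (ract x g) h := by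
  simp [ract, map_mul]

/-- A quandle is connected if the right action of `As(X)` on `X` is transitive. -/
def Connected (X : Type*) [PQuandle X] : Prop :=
  ∀ x y : X, ∃ g : Adj X, ract x g = y

/-- The homomorphism `ε : As(X) → ℤ` sending every generator `e_x` to `1`. -/
def eps : Adj X →* Multiplicative ℤ :=
  PresentedGroup.toGroup (f := fun _ : X => Multiplicative.ofAdd 1) (by
    rintro r ⟨x, y, rfl⟩
    simp only [map_mul, map_inv, FreeGroup.lift_apply_of]
    group)

@[simp] lemma eps_gen (x : X) : eps (gen x) = Multiplicative.ofAdd 1 :=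
  PresentedGroup.toGroup.of _

/-- The underlying set of the universal covering quandle: `Ker ε`. -/
def covOp (a : X) (g h : (eps (X := X)).ker) : (eps (X := X)).ker :=
  ⟨(gen a)⁻¹ * g.1 * (h.1)⁻¹ * gen a * h.1, by
    have hg : eps g.1 = 1 := g.2
    have hh : eps h.1 = 1 := h.2
    simp only [MonoidHom.mem_ker, map_mul, map_inv, hg, hh]
    group⟩

/-- `n`-fold covering operation. -/
def covOpn (a : X) (g : (eps (X := X)).ker) (n : ℕ) (h : (eps (X := X)).ker) :
    (eps (X := X)).ker := (fun u => covOp a u h)^[n] g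

/-- The right translation of the covering quandle as a permutation. -/
def covAct (a : X) (h : (eps (X := X)).ker) : Equiv.Perm (eps (X := X)).ker where
  toFun g := covOp a g h
  invFun g := ⟨gen a * g.1 * (h.1)⁻¹ * (gen a)⁻¹ * h.1, by
    have hg : eps g.1 = 1 := g.2
    have hh : eps h.1 = 1 := h.2
    simp only [MonoidHom.mem_ker, map_mul, map_inv, hg, hh]
    group⟩
  left_inv g := by
    apply Subtype.ext
    simp only [covOp]
    group
  right_inv g := by
    apply Subtype.ext
    simp only [covOp]
    group

end PQuandle

/-
Idea: `(· ◁ y)` lies in `Inn(X)`, so the orbit length `m` of `x` under it divides the order of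
`(· ◁ y)`. Inner automorphisms conjugate `(· ◁ z)` to `(· ◁ f z)`, and by connectedness some
`f ∈ Inn(X)` sends `y` to `x`, so `(· ◁ y)` and `(· ◁ x)` have the same order. Finally
`(· ◁ x)` fixes `x` since `x ◁ x = x`, so its order divides `|Stab(x)| = |Inn(X)|/|X|`.
-/

theorem Function.minimalPeriod_eq_of_isLeast {α : Type*} {f : α → α} {x : α} {m : ℕ}
    (h : IsLeast {n : ℕ | 0 < n ∧ f^[n] x = x} m) : Function.minimalPeriod f x = m :=
  le_antisymm (Function.IsPeriodicPt.minimalPeriod_le h.1.1 h.1.2)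
    (h.2 ⟨Function.minimalPeriod_pos_of_mem_periodicPts ⟨m, h.1⟩, Function.iterate_minimalPeriod⟩)

namespace PQuandle

variable {X : Type*} [PQuandle X]

lemma act_mem_Inn (z : X) : act z ∈ Inn X :=
  Subgroup.subset_closure ⟨z, rfl⟩

lemma map_op_of_mem_Inn {f : Equiv.Perm X} (hf : f ∈ Inn X) (a b : X) :
    f (a ◁ b) = f a ◁ f b := by
  induction hf using Subgroup.closure_induction generalizing a b with
  | mem g hg =>
    obtain ⟨z, rfl⟩ := hg
    exact op_distrib a b z
  | one => rfl
  | mul g h _ _ ihg ihh => simp only [Equiv.Perm.mul_apply, ihh, ihg]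
  | inv g _ ih =>
    apply g.injective
    simp only [ih, Equiv.Perm.coe_inv, Equiv.apply_symm_apply]

lemma act_apply_eq_conj_of_mem_Inn {f : Equiv.Perm X} (hf : f ∈ Inn X) (z : X) :
    act (f z) = f * act z * f⁻¹ := by
  ext w
  simp [map_op_of_mem_Inn hf]

lemma orderOf_act_apply_of_mem_Inn {f : Equiv.Perm X} (hf : f ∈ Inn X) (z : X) :
    orderOf (act (f z)) = orderOf (act z) := by
  have hconj : SemiconjBy f (act z) (act (f z)) := by
    rw [SemiconjBy, act_apply_eq_conj_of_mem_Inn hf, inv_mul_cancel_right]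
  exact (hconj.orderOf_eq f).symm

lemma act_mem_stabilizer (x : X) :
    (⟨act x, act_mem_Inn x⟩ : Inn X) ∈ MulAction.stabilizer (Inn X) x :=
  op_self x

lemma orderOf_act_dvd_card_stabilizer (x : X) :
    orderOf (act x) ∣ Nat.card (MulAction.stabilizer (Inn X) x) := by
  rw [← Subgroup.orderOf_mk (act x) (act_mem_Inn x)]
  exact Subgroup.orderOf_dvd_natCard _ (act_mem_stabilizer x)

lemma card_Inn_eq_card_mul_card_stabilizer (hconn : ∀ x y : X, ∃ f ∈ Inn X, f x = y) (x : X) :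
    Nat.card (Inn X) = Nat.card X * Nat.card (MulAction.stabilizer (Inn X) x) := by
  have : MulAction.IsPretransitive (Inn X) X := by
    refine ⟨fun a b => ?_⟩
    obtain ⟨f, hf, hfab⟩ := hconn a b
    exact ⟨⟨f, hf⟩, hfab⟩
  rw [← MulAction.index_stabilizer_of_transitive (Inn X) x, Subgroup.index_mul_card]

end PQuandle

open PQuandle in
theorem stmt19_general (X : Type*) [PQuandle X]
    (hconn : ∀ x y : X, ∃ f ∈ Inn X, f x = y) (x y : X) (m : ℕ)
    (hm : IsLeast {n : ℕ | 0 < n ∧ opn x n y = x} m) :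
    m ∣ Nat.card (Inn X) / Nat.card X := by
  have hm_dvd : m ∣ orderOf (act y) :=
    Function.minimalPeriod_eq_of_isLeast hm ▸ MulAction.period_dvd_orderOf (act y) x
  obtain ⟨f, hf, hfx⟩ := hconn y x
  have horder : orderOf (act y) = orderOf (act x) :=
    hfx ▸ (orderOf_act_apply_of_mem_Inn hf y).symm
  have hm_stab := hm_dvd.trans (horder ▸ orderOf_act_dvd_card_stabilizer x)
  rw [card_Inn_eq_card_mul_card_stabilizer hconn x]
  rcases (Nat.card X).eq_zero_or_pos with hX | hX
  · simp [hX]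
  · rwa [Nat.mul_div_cancel_left _ hX]

open PQuandle in
/-- In a finite connected quandle, the minimal `n > 0` with `x ◁ⁿ y = x` divides
`|Inn(X)|/|X|`, the order of the stabilizer of `x` in `Inn(X)`. -/
theorem stmt19 (X : Type*) [PQuandle X] [Finite X]
    (hconn : ∀ x y : X, ∃ f ∈ Inn X, f x = y) (x y : X) (m : ℕ)
    (hm : IsLeast {n : ℕ | 0 < n ∧ opn x n y = x} m) :
    m ∣ Nat.card (Inn X) / Nat.card X :=
  stmt19_general X hconn x y m hm
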